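/- arXiv:math/0412460 — 6 statements merged into one kernel-verified Lean document; each statement's English description precedes it below -/
import Mathlib

section
/- For every graph G=(V,E) with V={1,...,k} and every positive integer z, the q-chromatic function satisfies M_q(G,z) = Σ_{A⊆E} (-1)^{|A|} Π_{W∈C(A)} (z)_{q^{|W|}}, where C(A) is the set of connected components of the spanning subgraph (V,A), |W| is the number of vertices of the component W, and (z)_{q^m} = (q^{m·z}-1)/(q^m-1). -/
open Finset

private def liftFun {k z : ℕ} (G : SimpleGraph (Fin k)) (v : Fin k → Fin z)
    (hv : ∀ a b, G.Adj a b → v a = v b) : G.ConnectedComponent → Fin z :=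
  SimpleGraph.ConnectedComponent.lift v (fun a b p hp => by
    clear hp
    induction p with
    | nil => rfl
    | cons hadj _ ih => exact (hv _ _ hadj).trans ih)

private lemma liftFun_mk {k z : ℕ} (G : SimpleGraph (Fin k)) (v : Fin k → Fin z)
    (hv : ∀ a b, G.Adj a b → v a = v b) (i : Fin k) :
    liftFun G v hv (G.connectedComponentMk i) = v i := rfl

private lemma fiber_card {k : ℕ} (G : SimpleGraph (Fin k))
    [DecidableEq G.ConnectedComponent] (W : G.ConnectedComponent) :
    Nat.card W.supp = (Finset.univ.filter fun i => G.connectedComponentMk i = W).card := by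
  classical
  have h : W.supp = ↑(Finset.univ.filter fun i => G.connectedComponentMk i = W) := by
    ext v
    simp [SimpleGraph.ConnectedComponent.mem_supp_iff]
  rw [h, Nat.card_coe_set_eq, Set.ncard_coe_finset]

set_option maxHeartbeats 1000000 in
private lemma aux_key {R : Type*} [CommRing R] (q : R) (k z : ℕ)
    (A : Finset (Sym2 (Fin k))) :
    ∑ v : Fin k → Fin z,
      (if ∀ e ∈ A, (Sym2.map v e).IsDiag then (1:R) else 0) * q ^ (∑ i, (v i : ℕ)) =
    ∏ᶠ W : (SimpleGraph.fromEdgeSet (A : Set (Sym2 (Fin k)))).ConnectedComponent,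
      ∑ x ∈ Finset.range z, q ^ (Nat.card W.supp * x) := by
  classical
  set G := SimpleGraph.fromEdgeSet (A : Set (Sym2 (Fin k))) with hG
  haveI : Fintype G.ConnectedComponent := Fintype.ofFinite _
  have hsurj : Function.Surjective G.connectedComponentMk := fun W =>
    W.ind (fun i => ⟨i, rfl⟩)
  have hadjconst : ∀ (v : Fin k → Fin z), (∀ e ∈ A, (Sym2.map v e).IsDiag) →
      ∀ a b, G.Adj a b → v a = v b := by
    intro v hv a b hab
    have h1 : s(a,b) ∈ A := by
      have := (SimpleGraph.fromEdgeSet_adj _).mp hab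
      exact_mod_cast this.1
    have := hv _ h1
    rwa [Sym2.map_pair_eq, Sym2.mk_isDiag_iff] at this
  have step1 : (∑ v : Fin k → Fin z,
      (if ∀ e ∈ A, (Sym2.map v e).IsDiag then (1:R) else 0) * q ^ (∑ i, (v i : ℕ)))
      = ∑ v ∈ univ.filter (fun v : Fin k → Fin z => ∀ e ∈ A, (Sym2.map v e).IsDiag),
          q ^ (∑ i, (v i : ℕ)) := by
    rw [Finset.sum_filter]
    exact Finset.sum_congr rfl fun v _ => by split <;> simp
  rw [step1]
  have step2 : ∑ v ∈ univ.filter (fun v : Fin k → Fin z => ∀ e ∈ A, (Sym2.map v e).IsDiag),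
        q ^ (∑ i, (v i : ℕ))
      = ∑ g : G.ConnectedComponent → Fin z,
          q ^ (∑ i, ((g (G.connectedComponentMk i)) : ℕ)) := by
    refine Finset.sum_bij'
      (fun v hv => liftFun G v (hadjconst v (by simpa using (Finset.mem_filter.mp hv).2)))
      (fun g _ => fun i => g (G.connectedComponentMk i))
      (fun v hv => Finset.mem_univ _)
      (fun g hg => ?_) (fun v hv => rfl) (fun g hg => ?_) (fun v hv => rfl)
    · simp only [Finset.mem_filter, Finset.mem_univ, true_and]
      intro e he
      induction e using Sym2.ind with
      | _ i j =>
        rw [Sym2.map_pair_eq, Sym2.mk_isDiag_iff]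
        by_cases hij : i = j
        · rw [hij]
        · have hadj : G.Adj i j :=
            (SimpleGraph.fromEdgeSet_adj _).mpr ⟨by exact_mod_cast he, hij⟩
          rw [SimpleGraph.ConnectedComponent.connectedComponentMk_eq_of_adj hadj]
    · funext W
      obtain ⟨i, rfl⟩ := hsurj W
      rfl
  rw [step2]
  have hexp : ∀ g : G.ConnectedComponent → Fin z,
      (∑ i, ((g (G.connectedComponentMk i)) : ℕ))
      = ∑ W : G.ConnectedComponent, Nat.card W.supp * (g W : ℕ) := by
    intro g
    rw [Finset.sum_comp (fun W => ((g W : ℕ))) G.connectedComponentMk,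
      Finset.image_univ_of_surjective hsurj]
    exact Finset.sum_congr rfl fun W _ => by rw [fiber_card, smul_eq_mul]
  calc (∑ g : G.ConnectedComponent → Fin z, q ^ (∑ i, ((g (G.connectedComponentMk i)) : ℕ)))
      = ∑ g : G.ConnectedComponent → Fin z,
          ∏ W : G.ConnectedComponent, q ^ (Nat.card W.supp * (g W : ℕ)) := by
        refine Finset.sum_congr rfl fun g _ => ?_
        rw [hexp g, Finset.prod_pow_eq_pow_sum]
    _ = ∑ g ∈ Fintype.piFinset (fun _ : G.ConnectedComponent => (Finset.univ : Finset (Fin z))),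
          ∏ W : G.ConnectedComponent, q ^ (Nat.card W.supp * (g W : ℕ)) := by
        rw [Fintype.piFinset_univ]
    _ = ∏ W : G.ConnectedComponent, ∑ x : Fin z, q ^ (Nat.card W.supp * (x : ℕ)) :=
        (Finset.prod_univ_sum (fun _ : G.ConnectedComponent => (Finset.univ : Finset (Fin z)))
          (fun W x => q ^ (Nat.card W.supp * (x : ℕ)))).symm
    _ = ∏ᶠ W : G.ConnectedComponent, ∑ x ∈ Finset.range z, q ^ (Nat.card W.supp * x) := by
        rw [finprod_eq_prod_of_fintype]
        exact Finset.prod_congr rfl fun W _ =>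
          Fin.sum_univ_eq_sum_range (fun x => q ^ (Nat.card W.supp * x)) z

/-- q-chromatic expansion: M_q(G,z) = Σ_{A⊆E} (-1)^{|A|} Π_{W∈C(A)} (z)_{q^{|W|}}. -/
theorem stmt0 {R : Type*} [CommRing R] (q : R) (k z : ℕ)
    (E : Finset (Sym2 (Fin k))) (hE : ∀ e ∈ E, ¬ e.IsDiag) :
    ∑ v ∈ Finset.univ.filter
        (fun v : Fin k → Fin z => ∀ i j : Fin k, s(i, j) ∈ E → v i ≠ v j),
      q ^ (∑ i, (v i : ℕ)) =
    ∑ A ∈ E.powerset, (-1 : R) ^ A.card *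
      ∏ᶠ W : (SimpleGraph.fromEdgeSet (A : Set (Sym2 (Fin k)))).ConnectedComponent,
        ∑ x ∈ Finset.range z, q ^ (Nat.card W.supp * x) := by
  classical
  have hexpand : ∀ v : Fin k → Fin z,
      (if (∀ i j : Fin k, s(i, j) ∈ E → v i ≠ v j) then q ^ (∑ i, (v i : ℕ)) else 0)
      = ∑ A ∈ E.powerset, ((-1:R) ^ A.card *
          ((if ∀ e ∈ A, (Sym2.map v e).IsDiag then (1:R) else 0) * q ^ (∑ i, (v i : ℕ)))) := by
    intro v
    have hiff : (∀ e ∈ E, ¬ (Sym2.map v e).IsDiag)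
        ↔ (∀ i j : Fin k, s(i, j) ∈ E → v i ≠ v j) := by
      constructor
      · intro h i j hij hv
        exact h _ hij (by rw [Sym2.map_pair_eq, Sym2.mk_isDiag_iff]; exact hv)
      · intro h e he
        induction e using Sym2.ind with
        | _ i j =>
          rw [Sym2.map_pair_eq, Sym2.mk_isDiag_iff]
          exact h i j he
    have hprod : (∏ e ∈ E, ((1:R) - if (Sym2.map v e).IsDiag then 1 else 0))
        = if (∀ i j : Fin k, s(i, j) ∈ E → v i ≠ v j) then 1 else 0 := by
      by_cases hp : ∀ i j : Fin k, s(i, j) ∈ E → v i ≠ v j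
      · rw [if_pos hp]
        apply Finset.prod_eq_one
        intro e he
        rw [if_neg (hiff.mpr hp e he)]
        ring
      · rw [if_neg hp]
        push_neg at hp
        obtain ⟨i, j, hij, hv⟩ := hp
        refine Finset.prod_eq_zero hij ?_
        rw [if_pos (by rw [Sym2.map_pair_eq, Sym2.mk_isDiag_iff]; exact hv)]
        ring
    have hsum : (∏ e ∈ E, ((1:R) - if (Sym2.map v e).IsDiag then 1 else 0))
        = ∑ A ∈ E.powerset, (-1:R) ^ A.card *
            (if ∀ e ∈ A, (Sym2.map v e).IsDiag then (1:R) else 0) := by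
      have h1 : ∀ e : Sym2 (Fin k), ((1:R) - if (Sym2.map v e).IsDiag then 1 else 0)
          = (-(if (Sym2.map v e).IsDiag then 1 else 0)) + 1 := by intro e; ring
      simp only [h1]
      rw [Finset.prod_add]
      refine Finset.sum_congr rfl fun A hA => ?_
      rw [Finset.prod_const_one, mul_one]
      rw [show (fun e => -(if (Sym2.map v e).IsDiag then (1:R) else 0))
        = fun e => (-1) * (if (Sym2.map v e).IsDiag then (1:R) else 0) from by funext e; ring]
      rw [Finset.prod_mul_distrib, Finset.prod_const]
      by_cases h : ∀ e ∈ A, (Sym2.map v e).IsDiag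
      · rw [if_pos h, Finset.prod_eq_one fun e he => if_pos (h e he)]
      · rw [if_neg h]
        push_neg at h
        obtain ⟨e, he, hne⟩ := h
        rw [Finset.prod_eq_zero he
          (show (if (Sym2.map v e).IsDiag then (1:R) else 0) = 0 from if_neg hne),
          mul_zero]
    rw [← mul_one (if (∀ i j : Fin k, s(i, j) ∈ E → v i ≠ v j) then q ^ (∑ i, (v i : ℕ)) else 0)]
    rw [show (if (∀ i j : Fin k, s(i, j) ∈ E → v i ≠ v j) then q ^ (∑ i, (v i : ℕ)) else 0) * 1
      = (if (∀ i j : Fin k, s(i, j) ∈ E → v i ≠ v j) then (1:R) else 0) * q ^ (∑ i, (v i : ℕ))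
      from by split <;> ring]
    rw [← hprod, hsum, Finset.sum_mul]
    exact Finset.sum_congr rfl fun A hA => by ring
  rw [Finset.sum_filter]
  simp only [hexpand]
  rw [Finset.sum_comm]
  exact Finset.sum_congr rfl fun A hA => by
    rw [← Finset.mul_sum, aux_key]
end

section
/- For a graph G=(V,E), positive integer k, and edge weights v_{ij} = e^{J_{ij}} - 1, we have Σ_{A⊆E} Π_{W∈C(A)} (k)_{q^{|W|}} Π_{{i,j}∈A} v_{ij} = Σ_s q^{Σ_{v∈V} s(v)} e^{Σ_{{i,j}∈E} J_{ij}·δ(s(i),s(j))}, where the outer sum on the right is over all functions s: V → {1,...,k} and δ is the Kronecker delta. -/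
/-!
Writing `e^{J δ} = 1 + (e^J - 1) δ` and expanding the product over edges turns the right-hand
side into `∑_{A ⊆ E} ∏_{e ∈ A} v_e · Z_A`, where `Z_A` sums `q^{∑ s}` over the colourings `s`
that are constant along every edge of `A`. These are exactly the colourings of the connected
components of `(V, A)`, and a component `W` of colour `x` contributes `q^{|W| x}`, so `Z_A`
factors as `∏_W (k)_{q^{|W|}}`.
-/

open Finset

namespace SimpleGraph

variable {V α R : Type*} {G : SimpleGraph V}

theorem Reachable.eq_of_forall_adj_eq {f : V → α} (hf : ∀ u v, G.Adj u v → f u = f v)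
    {u v : V} (h : G.Reachable u v) : f u = f v := by
  rw [reachable_iff_reflTransGen] at h
  induction h with
  | refl => rfl
  | tail _ hadj ih => exact ih.trans (hf _ _ hadj)

theorem sum_filter_forall_adj_eq_sum_comp_connectedComponentMk [Fintype V] [DecidableEq V]
    [Fintype α] [DecidableEq α] [DecidableRel G.Adj] [Fintype G.ConnectedComponent]
    [DecidableEq G.ConnectedComponent] [AddCommMonoid R] (F : (V → α) → R) :
    ∑ f with ∀ u v, G.Adj u v → f u = f v, F f =
      ∑ c : G.ConnectedComponent → α, F (c ∘ G.connectedComponentMk) := by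
  symm
  refine sum_nbij' (· ∘ G.connectedComponentMk) (fun f W => f W.out) ?_
    (fun _ _ => mem_univ _) ?_ ?_ (fun _ _ => rfl)
  · intro c _
    simpa using fun u v huv => congrArg c (ConnectedComponent.connectedComponentMk_eq_of_adj huv)
  · intro c _
    funext W
    exact congrArg c W.out_eq
  · intro f hf
    funext v
    exact Reachable.eq_of_forall_adj_eq (mem_filter.1 hf).2
      (ConnectedComponent.exact (Quot.out_eq _))

theorem prod_comp_connectedComponentMk [Fintype V] [Fintype G.ConnectedComponent]
    [DecidableEq G.ConnectedComponent] {M : Type*} [CommMonoid M] (f : G.ConnectedComponent → M) :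
    ∏ v, f (G.connectedComponentMk v) = ∏ W, f W ^ Nat.card W.supp := by
  rw [← prod_fiberwise univ G.connectedComponentMk]
  refine prod_congr rfl fun W _ => ?_
  rw [prod_congr rfl fun v hv => congrArg f (mem_filter.1 hv).2, prod_const]
  show _ = _ ^ Nat.card {v // G.connectedComponentMk v = W}
  rw [Nat.card_eq_fintype_card, Fintype.card_subtype]

theorem sum_filter_forall_adj_eq_prod_sum_pow [Fintype V] [DecidableEq V] [Fintype α]
    [DecidableEq α] [DecidableRel G.Adj] [Fintype G.ConnectedComponent]
    [DecidableEq G.ConnectedComponent] [CommSemiring R] (w : α → R) :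
    ∑ f : V → α with ∀ u v, G.Adj u v → f u = f v, ∏ v, w (f v) =
      ∏ W : G.ConnectedComponent, ∑ x, w x ^ Nat.card W.supp := by
  rw [sum_filter_forall_adj_eq_sum_comp_connectedComponentMk, Fintype.prod_sum]
  exact sum_congr rfl fun c _ => prod_comp_connectedComponentMk (w ∘ c)

/-- Pairs `(v, v)` contribute no edge. -/
abbrev fromPairs [DecidableEq V] (A : Finset (V × V)) : SimpleGraph V :=
  fromEdgeSet ((A.image fun e => s(e.1, e.2) : Finset (Sym2 V)) : Set (Sym2 V))

theorem forall_fromPairs_adj_eq_iff [DecidableEq V] (A : Finset (V × V)) (f : V → α) :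
    (∀ u v, (fromPairs A).Adj u v → f u = f v) ↔ ∀ e ∈ A, f e.1 = f e.2 := by
  simp only [fromEdgeSet_adj, coe_image, Set.mem_image, mem_coe, Sym2.eq_iff]
  constructor
  · intro h e he
    by_cases hne : e.1 = e.2
    · rw [hne]
    · exact h _ _ ⟨⟨e, he, Or.inl ⟨rfl, rfl⟩⟩, hne⟩
  · rintro h u v ⟨⟨e, he, ⟨rfl, rfl⟩ | ⟨rfl, rfl⟩⟩, -⟩
    exacts [h e he, (h e he).symm]

theorem sum_filter_forall_mem_eq_finprod_fromPairs [Fintype V] [DecidableEq V] [CommSemiring R]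
    (A : Finset (V × V)) (k : ℕ) (q : R) :
    ∑ f : V → Fin k with ∀ e ∈ A, f e.1 = f e.2, q ^ ∑ v, (f v : ℕ) =
      ∏ᶠ W : (fromPairs A).ConnectedComponent, ∑ x ∈ range k, q ^ (Nat.card W.supp * x) := by
  classical
  rw [← filter_congr fun f _ => forall_fromPairs_adj_eq_iff A f, finprod_eq_prod_of_fintype]
  simp_rw [← prod_pow_eq_pow_sum]
  rw [sum_filter_forall_adj_eq_prod_sum_pow (fun x : Fin k => q ^ (x : ℕ))]
  refine prod_congr rfl fun W _ => ?_
  rw [Fin.sum_univ_eq_sum_range (fun x => (q ^ x) ^ Nat.card W.supp) k]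
  exact sum_congr rfl fun x _ => by rw [← pow_mul, mul_comm]

end SimpleGraph

theorem Finset.prod_mul_boole_add_one {ι R : Type*} [CommSemiring R] (E : Finset ι) (v : ι → R)
    (p : ι → Prop) [DecidablePred p] :
    ∏ e ∈ E, (v e * (if p e then 1 else 0) + 1) =
      ∑ A ∈ E.powerset, (∏ e ∈ A, v e) * if ∀ e ∈ A, p e then 1 else 0 := by
  simp_rw [prod_add_one, prod_mul_distrib, prod_boole]

theorem Real.exp_sum_mul_boole {ι : Type*} (E : Finset ι) (J : ι → ℝ) (p : ι → Prop)
    [DecidablePred p] :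
    Real.exp (∑ e ∈ E, J e * if p e then 1 else 0) =
      ∑ A ∈ E.powerset, (∏ e ∈ A, (Real.exp (J e) - 1)) * if ∀ e ∈ A, p e then 1 else 0 := by
  have exp_mul_boole (e : ι) :
      Real.exp (J e * if p e then 1 else 0) = (Real.exp (J e) - 1) * (if p e then 1 else 0) + 1 := by
    split_ifs <;> simp
  rw [Real.exp_sum, prod_congr rfl fun e _ => exp_mul_boole e, prod_mul_boole_add_one]

theorem stmt2_general (n k : ℕ) (E : Finset (Fin n × Fin n))
    (J : Fin n × Fin n → ℝ) (q : ℝ) :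
    ∑ A ∈ E.powerset,
      (∏ᶠ W : (SimpleGraph.fromEdgeSet
          (((A.image fun e => s(e.1, e.2)) : Finset (Sym2 (Fin n))) :
            Set (Sym2 (Fin n)))).ConnectedComponent,
        ∑ x ∈ Finset.range k, q ^ (Nat.card W.supp * x)) *
      ∏ e ∈ A, (Real.exp (J e) - 1) =
    ∑ s : Fin n → Fin k,
      q ^ (∑ v, (s v : ℕ)) *
      Real.exp (∑ e ∈ E, J e * (if s e.1 = s e.2 then 1 else 0)) := by
  simp_rw [← SimpleGraph.sum_filter_forall_mem_eq_finprod_fromPairs, Real.exp_sum_mul_boole,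
    mul_sum, sum_mul, sum_filter]
  rw [sum_comm]
  refine sum_congr rfl fun A _ => sum_congr rfl fun s _ => ?_
  split_ifs <;> ring

/-- q-Potts: Σ_{A⊆E} Π_{W∈C(A)} (k)_{q^{|W|}} Π_{{i,j}∈A} (e^{J_{ij}}-1)
    = Σ_s q^{Σ_v s(v)} e^{Σ_{{i,j}∈E} J_{ij} δ(s(i),s(j))}. -/
theorem stmt2 (n k : ℕ) (hk : 1 ≤ k) (E : Finset (Fin n × Fin n))
    (hE : ∀ e ∈ E, e.1 < e.2) (J : Fin n × Fin n → ℝ) (q : ℝ) :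
    ∑ A ∈ E.powerset,
      (∏ᶠ W : (SimpleGraph.fromEdgeSet
          (((A.image fun e => s(e.1, e.2)) : Finset (Sym2 (Fin n))) :
            Set (Sym2 (Fin n)))).ConnectedComponent,
        ∑ x ∈ Finset.range k, q ^ (Nat.card W.supp * x)) *
      ∏ e ∈ A, (Real.exp (J e) - 1) =
    ∑ s : Fin n → Fin k,
      q ^ (∑ v, (s v : ℕ)) *
      Real.exp (∑ e ∈ E, J e * (if s e.1 = s e.2 then 1 else 0)) :=
  stmt2_general n k E J q
end

section
/- For a graph G=(V,E), Σ_s q^{Σ_{v∈V} s(v)} e^{Σ_{{i,j}∈E} J_{ij} s(i)s(j)} = Π_{{i,j}∈E} cosh(J_{ij}) · Σ_{A⊆E} (Π_{{i,j}∈A} tanh(J_{ij})) (q - q^{-1})^{o(A)} (q + q^{-1})^{|V| - o(A)}, where the sum over s ranges over functions s: V → {-1,+1} and o(A) is the number of vertices of odd degree in the subgraph (V,A). -/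
open Finset

private lemma my_zpow_sum {α : Type*} (q : ℝ) (hq : q ≠ 0) (s : Finset α) (f : α → ℤ) :
    q ^ (∑ i ∈ s, f i) = ∏ i ∈ s, q ^ f i := by
  induction s using Finset.cons_induction with
  | empty => simp
  | cons a s ha ih => rw [Finset.sum_cons, Finset.prod_cons, zpow_add₀ hq, ih]

private lemma exp_factor (x : ℝ) (b c : Bool) :
    Real.exp (x * (if b then (1:ℝ) else -1) * (if c then (1:ℝ) else -1)) =
      Real.cosh x * (1 + Real.tanh x * ((if b then (1:ℝ) else -1) * (if c then (1:ℝ) else -1))) := by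
  have h := (Real.cosh_pos x).ne'
  cases b <;> cases c <;>
    simp [Real.tanh_eq_sinh_div_cosh, mul_add, mul_sub, mul_div_cancel₀, h,
      Real.cosh_add_sinh, ← Real.cosh_sub_sinh, mul_comm, sub_eq_add_neg]

private lemma pair_prod (n : ℕ) (e : Fin n × Fin n) (he : e.1 ≠ e.2) (f : Fin n → ℝ) :
    f e.1 * f e.2 = ∏ v : Fin n, (if e.1 = v ∨ e.2 = v then f v else 1) := by
  rw [Finset.prod_ite, Finset.prod_const_one, mul_one]
  have : Finset.univ.filter (fun v => e.1 = v ∨ e.2 = v) = {e.1, e.2} := by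
    ext v; simp [eq_comm]
  rw [this, Finset.prod_insert (by simp [he]), Finset.prod_singleton]

private lemma deg_prod (n : ℕ) (A : Finset (Fin n × Fin n)) (hA : ∀ e ∈ A, e.1 ≠ e.2)
    (s : Fin n → Bool) :
    ∏ e ∈ A, ((if s e.1 then (1:ℝ) else -1) * (if s e.2 then (1:ℝ) else -1)) =
      ∏ v : Fin n, (if s v then (1:ℝ) else -1) ^ ((A.filter fun e => e.1 = v ∨ e.2 = v)).card := by
  calc ∏ e ∈ A, ((if s e.1 then (1:ℝ) else -1) * (if s e.2 then (1:ℝ) else -1))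
      = ∏ e ∈ A, ∏ v : Fin n, (if e.1 = v ∨ e.2 = v then (if s v then (1:ℝ) else -1) else 1) :=
        Finset.prod_congr rfl fun e he =>
          pair_prod n e (hA e he) (fun v => if s v then (1:ℝ) else -1)
    _ = ∏ v : Fin n, ∏ e ∈ A, (if e.1 = v ∨ e.2 = v then (if s v then (1:ℝ) else -1) else 1) :=
        Finset.prod_comm
    _ = _ := by
        refine Finset.prod_congr rfl fun v _ => ?_
        rw [Finset.prod_ite, Finset.prod_const, Finset.prod_const_one, mul_one]

private lemma key (n : ℕ) (q : ℝ) (hq : q ≠ 0) (A : Finset (Fin n × Fin n))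
    (hA : ∀ e ∈ A, e.1 ≠ e.2) :
    ∑ s : Fin n → Bool, q ^ (∑ v, (if s v then (1 : ℤ) else -1)) *
      ∏ e ∈ A, ((if s e.1 then (1:ℝ) else -1) * (if s e.2 then (1:ℝ) else -1)) =
    (q - q⁻¹) ^ ((Finset.univ.filter (fun v : Fin n =>
        Odd ((A.filter fun e => e.1 = v ∨ e.2 = v)).card)).card) *
    (q + q⁻¹) ^ (n - (Finset.univ.filter (fun v : Fin n =>
        Odd ((A.filter fun e => e.1 = v ∨ e.2 = v)).card)).card) := by
  set d : Fin n → ℕ := fun v => ((A.filter fun e => e.1 = v ∨ e.2 = v)).card with hd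
  calc ∑ s : Fin n → Bool, q ^ (∑ v, (if s v then (1 : ℤ) else -1)) *
        ∏ e ∈ A, ((if s e.1 then (1:ℝ) else -1) * (if s e.2 then (1:ℝ) else -1))
      = ∑ s : Fin n → Bool, ∏ v,
          (q ^ (if s v then (1:ℤ) else -1) * (if s v then (1:ℝ) else -1) ^ (d v)) := by
        refine Finset.sum_congr rfl fun s _ => ?_
        rw [my_zpow_sum q hq, deg_prod n A hA, ← Finset.prod_mul_distrib]
    _ = ∏ v : Fin n, ((q:ℝ) + q⁻¹ * (-1) ^ (d v)) := by
        rw [← Fintype.piFinset_univ, Finset.sum_prod_piFinset (Finset.univ : Finset Bool)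
          (fun v b => (q ^ (if b then (1:ℤ) else -1)) * (if b then (1:ℝ) else -1) ^ d v)]
        refine Finset.prod_congr rfl fun v _ => ?_
        rw [Fintype.sum_bool]
        simp
    _ = _ := by
        have h : ∀ v : Fin n, (q + q⁻¹ * (-1:ℝ) ^ (d v)) =
            if Odd (d v) then q - q⁻¹ else q + q⁻¹ := by
          intro v
          rcases Nat.even_or_odd (d v) with h | h
          · simp [h.neg_one_pow, Nat.not_odd_iff_even.mpr h]
          · simp [h.neg_one_pow, h, sub_eq_add_neg, mul_neg, mul_one]
        rw [Finset.prod_congr rfl (fun v _ => h v), Finset.prod_ite,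
          Finset.prod_const, Finset.prod_const, Finset.filter_not,
          Finset.card_sdiff_of_subset (Finset.filter_subset _ _), Finset.card_univ, Fintype.card_fin]

/-- q-deformed Van der Waerden expansion of the Ising partition function. -/
theorem stmt3 (n : ℕ) (E : Finset (Fin n × Fin n)) (hE : ∀ e ∈ E, e.1 < e.2)
    (J : Fin n × Fin n → ℝ) (q : ℝ) (hq : q ≠ 0) :
    ∑ s : Fin n → Bool,
      q ^ (∑ v, (if s v then (1 : ℤ) else -1)) *
        Real.exp (∑ e ∈ E, J e * (if s e.1 then (1:ℝ) else -1) *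
          (if s e.2 then (1:ℝ) else -1)) =
    (∏ e ∈ E, Real.cosh (J e)) *
      ∑ A ∈ E.powerset, (∏ e ∈ A, Real.tanh (J e)) *
        (q - q⁻¹) ^ ((Finset.univ.filter (fun v : Fin n =>
            Odd ((A.filter fun e => e.1 = v ∨ e.2 = v)).card)).card) *
        (q + q⁻¹) ^ (n - (Finset.univ.filter (fun v : Fin n =>
            Odd ((A.filter fun e => e.1 = v ∨ e.2 = v)).card)).card) := by
  classical
  calc ∑ s : Fin n → Bool,
      q ^ (∑ v, (if s v then (1 : ℤ) else -1)) *
        Real.exp (∑ e ∈ E, J e * (if s e.1 then (1:ℝ) else -1) *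
          (if s e.2 then (1:ℝ) else -1))
      = ∑ s : Fin n → Bool, q ^ (∑ v, (if s v then (1 : ℤ) else -1)) *
          ((∏ e ∈ E, Real.cosh (J e)) * ∑ A ∈ E.powerset, ∏ e ∈ A,
            (Real.tanh (J e) * ((if s e.1 then (1:ℝ) else -1) * (if s e.2 then (1:ℝ) else -1)))) := by
        refine Finset.sum_congr rfl fun s _ => ?_
        congr 1
        rw [Real.exp_sum, Finset.prod_congr rfl fun e _ => exp_factor (J e) (s e.1) (s e.2),
          Finset.prod_mul_distrib]
        congr 1
        rw [Finset.prod_congr rfl fun e (_ : e ∈ E) =>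
          add_comm 1 (Real.tanh (J e) * ((if s e.1 then (1:ℝ) else -1) * (if s e.2 then (1:ℝ) else -1))),
          Finset.prod_add]
        simp
    _ = (∏ e ∈ E, Real.cosh (J e)) * ∑ A ∈ E.powerset, (∏ e ∈ A, Real.tanh (J e)) *
          ∑ s : Fin n → Bool, q ^ (∑ v, (if s v then (1 : ℤ) else -1)) *
            ∏ e ∈ A, ((if s e.1 then (1:ℝ) else -1) * (if s e.2 then (1:ℝ) else -1)) := by
        simp only [Finset.mul_sum]
        rw [Finset.sum_comm]
        refine Finset.sum_congr rfl fun A _ => Finset.sum_congr rfl fun s _ => ?_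
        rw [Finset.prod_mul_distrib]
        ring
    _ = _ := by
        refine congrArg _ (Finset.sum_congr rfl fun A hA => ?_)
        rw [key n q hq A (fun e he => (hE e (Finset.mem_powerset.mp hA he)).ne)]
        ring
end

section
/- For the complete graph K_k on k vertices and n ≥ k, the q-chromatic function satisfies M_q(K_k, n) = k! · binom(n,k)_q · q^{k(k-1)/2}. Equivalently, Σ q^{v_1+...+v_k}, summed over all k-tuples of pairwise distinct integers in {0,...,n-1}, equals k! binom(n,k)_q q^{k(k-1)/2}. -/
/-!
An injective tuple `v : Fin k → Fin n` is an ordering of its image, so the sum is `k!` times the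
sum of `q ^ (∑ x ∈ S, x)` over the `k`-subsets `S` of `{0, …, n-1}`. Splitting these subsets on
whether they contain `n` gives the `q`-Pascal recursion, from which induction on `n` yields the
division-free identity `(subset sum) · [k]_q! · [n-k]_q! = [n]_q! · q^(k choose 2)`.
-/

/-- quantum integer (m)_q -/
def qInt {K : Type*} [Field K] (q : K) (m : ℕ) : K := ∑ j ∈ Finset.range m, q ^ j

/-- quantum factorial (m)!_q -/
def qFact {K : Type*} [Field K] (q : K) (m : ℕ) : K := ∏ i ∈ Finset.range m, qInt q (i + 1)

/-- Gaussian binomial coefficient, defined via quantum factorials. -/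
def qBinom {K : Type*} [Field K] (q : K) (n k : ℕ) : K :=
  qFact q n / (qFact q k * qFact q (n - k))

open Finset Function

namespace Finset

variable {α M : Type*} [AddCommMonoid M]

theorem sum_powersetCard_succ_insert [DecidableEq α] {s : Finset α} {a : α} (ha : a ∉ s)
    (k : ℕ) (f : Finset α → M) :
    ∑ t ∈ (insert a s).powersetCard (k + 1), f t =
      ∑ t ∈ s.powersetCard (k + 1), f t + ∑ t ∈ s.powersetCard k, f (insert a t) := by
  rw [powersetCard_succ_insert ha, sum_union, sum_image]
  · exact insert_erase_invOn.2.injOn.mono fun t ht ↦ notMem_mono (mem_powersetCard.1 ht).1 ha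
  · aesop (add simp [disjoint_left, insert_subset_iff, mem_powersetCard])

end Finset

section QAnalogues

variable {K : Type*} [Field K] (q : K)

theorem qInt_add (a b : ℕ) : qInt q (a + b) = qInt q a + q ^ a * qInt q b := by
  simp only [qInt, sum_range_add, mul_sum, pow_add]

@[simp]
theorem qInt_zero : qInt q 0 = 0 := sum_range_zero _

@[simp]
theorem qFact_zero : qFact q 0 = 1 := prod_range_zero _

theorem qFact_succ (m : ℕ) : qFact q (m + 1) = qFact q m * qInt q (m + 1) :=
  prod_range_succ _ _

theorem qFact_ne_zero {q : K} {m n : ℕ} (hmn : m ≤ n)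
    (hq : ∀ i : ℕ, 1 ≤ i → i ≤ n → qInt q i ≠ 0) : qFact q m ≠ 0 :=
  prod_ne_zero_iff.2 fun i hi ↦ hq (i + 1) (by omega) (by simp at hi; omega)

/-- The elementary symmetric polynomial `e_k(1, q, …, q^(n-1))`. -/
def qSubsetSum (n k : ℕ) : K := ∑ S ∈ (range n).powersetCard k, q ^ (∑ x ∈ S, x)

@[simp]
theorem qSubsetSum_zero_right (n : ℕ) : qSubsetSum q n 0 = 1 := by
  simp [qSubsetSum]

theorem qSubsetSum_eq_zero_of_lt {n k : ℕ} (h : n < k) : qSubsetSum q n k = 0 := by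
  rw [qSubsetSum, powersetCard_eq_empty.2 (by rwa [card_range]), sum_empty]

theorem qSubsetSum_succ_succ (n k : ℕ) :
    qSubsetSum q (n + 1) (k + 1) = qSubsetSum q n (k + 1) + q ^ n * qSubsetSum q n k := by
  rw [qSubsetSum, range_add_one, sum_powersetCard_succ_insert notMem_range_self, qSubsetSum,
    qSubsetSum, mul_sum]
  congr 1
  refine sum_congr rfl fun S hS ↦ ?_
  have hn : n ∉ S := fun h ↦ by simpa using (mem_powersetCard.1 hS).1 h
  rw [sum_insert hn, pow_add]

theorem qSubsetSum_mul_qFact_mul_qFact {n k : ℕ} (hkn : k ≤ n) :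
    qSubsetSum q n k * qFact q k * qFact q (n - k) = qFact q n * q ^ k.choose 2 := by
  induction n generalizing k with
  | zero =>
    obtain rfl : k = 0 := by omega
    simp
  | succ n ih =>
    rcases k with _ | k
    · simp
    have hB := ih (k := k) (by omega)
    have hA : qSubsetSum q n (k + 1) * qFact q (k + 1) * qFact q (n - k) =
        qFact q n * q ^ (k + 1).choose 2 * qInt q (n - k) := by
      rcases (show k < n ∨ k = n by omega) with hk | rfl
      · rw [show n - k = n - (k + 1) + 1 by omega, qFact_succ q (n - (k + 1))]
        linear_combination qInt q (n - (k + 1) + 1) * ih hk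
      · simp [qSubsetSum_eq_zero_of_lt q (Nat.lt_succ_self k)]
    have hsplit : qInt q (n + 1) = qInt q (n - k) + q ^ (n - k) * qInt q (k + 1) := by
      rw [← qInt_add]; congr 1; omega
    have hchoose : (k + 1).choose 2 = k + k.choose 2 := by
      rw [Nat.choose_succ_succ', Nat.choose_one_right]
    rw [qSubsetSum_succ_succ, Nat.add_sub_add_right, qFact_succ q n, hsplit, hchoose, pow_add,
      ← pow_mul_pow_sub q (show k ≤ n by omega), qFact_succ q k]
    rw [hchoose, pow_add, qFact_succ q k] at hA
    linear_combination hA + q ^ k * q ^ (n - k) * qInt q (k + 1) * hB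

end QAnalogues

theorem qSubsetSum_eq_qBinom_mul_pow {K : Type*} [Field K] {q : K} {n k : ℕ} (hkn : k ≤ n)
    (hq : ∀ i : ℕ, 1 ≤ i → i ≤ n → qInt q i ≠ 0) :
    qSubsetSum q n k = qBinom q n k * q ^ k.choose 2 := by
  rw [qBinom, div_mul_eq_mul_div, eq_div_iff (mul_ne_zero (qFact_ne_zero hkn hq)
    (qFact_ne_zero (Nat.sub_le n k) hq)), ← qSubsetSum_mul_qFact_mul_qFact q hkn, mul_assoc]

section InjectiveTuples

variable {α : Type*} [Fintype α] [DecidableEq α]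

noncomputable def injectiveImageEquiv {k : ℕ} {S : Finset α} (hS : #S = k) :
    {v : Fin k → α // Injective v ∧ univ.image v = S} ≃ (Fin k ≃ S) where
  toFun v :=
    Equiv.ofBijective (fun i ↦ ⟨v.1 i, v.2.2.subset (mem_image_of_mem v.1 (mem_univ i))⟩)
    ((Fintype.bijective_iff_injective_and_card _).2
      ⟨fun _ _ h ↦ v.2.1 (congrArg Subtype.val h), by simp [hS]⟩)
  invFun e := ⟨fun i ↦ e i, Subtype.val_injective.comp e.injective, by
    ext x
    simpa using ⟨by rintro ⟨i, rfl⟩; exact (e i).2, fun hx ↦ ⟨e.symm ⟨x, hx⟩, by simp⟩⟩⟩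
  left_inv _ := rfl
  right_inv _ := Equiv.ext fun _ ↦ rfl

theorem card_filter_injective_image_eq {k : ℕ} {S : Finset α} (hS : #S = k) :
    #{v : Fin k → α | Injective v ∧ univ.image v = S} = k.factorial := by
  rw [← Fintype.card_subtype, Fintype.card_congr (injectiveImageEquiv hS),
    Fintype.card_equiv (Fintype.equivOfCardEq (by simp [hS])), Fintype.card_fin]

theorem sum_injective_eq_factorial_smul_sum_powersetCard {M : Type*} [AddCommMonoid M]
    (k : ℕ) (f : Finset α → M) :
    ∑ v : Fin k → α with Injective v, f (univ.image v) =
      k.factorial • ∑ S ∈ univ.powersetCard k, f S := by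
  have hmaps : ∀ v ∈ ({v : Fin k → α | Injective v} : Finset _),
      univ.image v ∈ univ.powersetCard k := fun v hv ↦
    mem_powersetCard.2 ⟨subset_univ _, by simp [card_image_of_injective _ (mem_filter.1 hv).2]⟩
  rw [← sum_fiberwise_of_maps_to hmaps, smul_sum]
  refine sum_congr rfl fun S hS ↦ ?_
  rw [sum_congr rfl fun v hv ↦ by rw [(mem_filter.1 hv).2], sum_const, filter_filter,
    card_filter_injective_image_eq (mem_powersetCard.1 hS).2]

end InjectiveTuples

theorem sum_injective_pow_sum_eq_factorial_mul_qSubsetSum {K : Type*} [Field K] (q : K)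
    (k n : ℕ) :
    ∑ v ∈ univ.filter (fun v : Fin k → Fin n => Injective v), q ^ (∑ i, (v i : ℕ)) =
      k.factorial * qSubsetSum q n k := by
  have hsum : ∀ v ∈ univ.filter (fun v : Fin k → Fin n => Injective v),
      q ^ (∑ i, (v i : ℕ)) = q ^ (∑ x ∈ univ.image v, (x : ℕ)) := fun v hv ↦ by
    rw [sum_image fun _ _ _ _ h ↦ (mem_filter.1 hv).2 h]
  rw [sum_congr rfl hsum, sum_injective_eq_factorial_smul_sum_powersetCard k
      (fun S : Finset (Fin n) ↦ q ^ (∑ x ∈ S, (x : ℕ))), nsmul_eq_mul, qSubsetSum,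
    ← Nat.Iio_eq_range, ← Fin.map_valEmbedding_univ, powersetCard_map, sum_map]
  simp only [RelEmbedding.coe_toEmbedding, mapEmbedding_apply, sum_map, Fin.valEmbedding_apply]

/-- M_q(K_k,n) = k! binom(n,k)_q q^{k(k-1)/2}: the sum of q^{v_1+...+v_k} over
    k-tuples of pairwise distinct values in {0,...,n-1}. -/
theorem stmt7 {K : Type*} [Field K] (q : K) (k n : ℕ) (hkn : k ≤ n)
    (hq : ∀ i : ℕ, 1 ≤ i → i ≤ n → qInt q i ≠ 0) :
    ∑ v ∈ Finset.univ.filter (fun v : Fin k → Fin n => Function.Injective v),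
        q ^ (∑ i, (v i : ℕ)) =
      (k.factorial : K) * qBinom q n k * q ^ (k * (k - 1) / 2) := by
  rw [sum_injective_pow_sum_eq_factorial_mul_qSubsetSum, qSubsetSum_eq_qBinom_mul_pow hkn hq,
    ← Nat.choose_two_right, mul_assoc]
end

section
/- Key single-vertex lemma for the defected q-chromatic sum: let N ⊆ {1,...,k-1} with |N| = m, fix pairwise-distinct values (v_j)_{j∈N} ⊆ {0,...,z-1}. Then Σ_{v_k ∈ {0,...,z-1} \ {v_j : j∈N}} t^{v_k - |{j∈N : v_j < v_k}|} = (z - m)_t = (1 - t^{z-m})/(1 - t). -/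
/-- Single-vertex lemma: for m fixed distinct values S in {0,...,z-1},
    Σ_{x ∉ S} t^{x - #{s∈S : s<x}} = (z-m)_t = (1-t^{z-m})/(1-t). -/
theorem stmt14 {K : Type*} [Field K] (t : K) (ht : t ≠ 1) (z m : ℕ) (hm : m ≤ z)
    (S : Finset (Fin z)) (hS : S.card = m) :
    ∑ x ∈ Finset.univ \ S,
        t ^ ((x : ℕ) - (S.filter (fun s => s < x)).card) =
      (1 - t ^ (z - m)) / (1 - t) := by
  classical
  set T : Finset (Fin z) := Finset.univ \ S with hT
  have hTcard : T.card = z - m := by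
    rw [hT, Finset.card_sdiff_of_subset (Finset.subset_univ S), Finset.card_univ, Fintype.card_fin, hS]
  set n := z - m with hn
  let e := T.orderIsoOfFin hTcard
  have key : ∀ i : Fin n, ((e i : Fin z) : ℕ) - (S.filter (fun s => s < (e i : Fin z))).card = (i : ℕ) := by
    intro i
    have hA : (T.filter (fun s => s < (e i : Fin z))).card = (i : ℕ) := by
      have himg : T.filter (fun s => s < (e i : Fin z)) =
          (Finset.Iio i).image (fun j => ((e j : Fin z))) := by
        ext y
        simp only [Finset.mem_filter, Finset.mem_image, Finset.mem_Iio]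
        constructor
        · rintro ⟨hyT, hylt⟩
          refine ⟨e.symm ⟨y, hyT⟩, ?_, by simp⟩
          rw [← e.lt_iff_lt, OrderIso.apply_symm_apply]
          exact hylt
        · rintro ⟨j, hj, rfl⟩
          exact ⟨(e j).2, Subtype.coe_lt_coe.mpr (e.lt_iff_lt.mpr hj)⟩
      rw [himg, Finset.card_image_of_injective _ (fun a b h => e.injective (Subtype.ext h)),
        Fin.card_Iio]
    have hB : ((e i : Fin z) : ℕ) =
        (T.filter (fun s => s < (e i : Fin z))).card + (S.filter (fun s => s < (e i : Fin z))).card := by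
      have huniv : Finset.univ.filter (fun s => s < (e i : Fin z)) =
          (T.filter (fun s => s < (e i : Fin z))) ∪ (S.filter (fun s => s < (e i : Fin z))) := by
        ext y
        simp only [Finset.mem_filter, Finset.mem_union, hT, Finset.mem_sdiff, Finset.mem_univ,
          true_and]
        tauto
      have hdisj : Disjoint (T.filter (fun s => s < (e i : Fin z)))
          (S.filter (fun s => s < (e i : Fin z))) := by
        apply Finset.disjoint_filter_filter
        rw [hT]; exact Finset.sdiff_disjoint
      have : Finset.univ.filter (fun s => s < (e i : Fin z)) = Finset.Iio (e i : Fin z) := by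
        ext y; simp
      rw [← Finset.card_union_of_disjoint hdisj, ← huniv, this, Fin.card_Iio]
    omega
  have hsum : ∑ x ∈ T, t ^ ((x : ℕ) - (S.filter (fun s => s < x)).card) =
      ∑ i : Fin n, t ^ (i : ℕ) := by
    rw [← Finset.sum_coe_sort T]
    exact (Fintype.sum_equiv e.toEquiv _ _ (fun i => congrArg (t ^ ·) (key i).symm)).symm
  rw [hsum, Fin.sum_univ_eq_sum_range (fun i => t ^ i), geom_sum_eq ht]
  rw [div_eq_div_iff (sub_ne_zero.mpr ht) (sub_ne_zero.mpr (Ne.symm ht))]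
  ring
end

section
/- Fortuin–Kasteleyn expansion: for a graph G=(V,E) and k ≥ 1, Σ_{s:V→{1,...,k}} Π_{{i,j}∈E} (1 + v_{ij}·δ(s(i),s(j))) = Σ_{A⊆E} k^{c(A)} Π_{{i,j}∈A} v_{ij}, where c(A) is the number of connected components of the spanning subgraph (V,A). In particular, with all v_{ij} = e^x - 1, the Potts partition function P^k(G,x) equals B(G, e^x - 1, k) = Σ_{A⊆E} k^{c(A)} (e^x-1)^{|A|}. -/
open SimpleGraph Finset

private lemma fk_adj_eq {n k : ℕ} (A : Finset (Fin n × Fin n))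
    (hA : ∀ e ∈ A, e.1 ≠ e.2) (s : Fin n → Fin k)
    (hs : ∀ e ∈ A, s e.1 = s e.2) {a b : Fin n}
    (h : (SimpleGraph.fromEdgeSet
        (((A.image fun e => s(e.1, e.2)) : Finset (Sym2 (Fin n))) :
          Set (Sym2 (Fin n)))).Adj a b) : s a = s b := by
  rw [fromEdgeSet_adj] at h
  obtain ⟨hmem, hne⟩ := h
  simp only [Finset.coe_image, Set.mem_image, Finset.mem_coe] at hmem
  obtain ⟨e, he, heq⟩ := hmem
  rw [Sym2.eq_iff] at heq
  rcases heq with ⟨h1, h2⟩ | ⟨h1, h2⟩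
  · rw [← h1, ← h2]; exact hs e he
  · rw [← h1, ← h2]; exact (hs e he).symm

private lemma fk_count {n k : ℕ} (A : Finset (Fin n × Fin n))
    (hA : ∀ e ∈ A, e.1 ≠ e.2) :
    ((Finset.univ.filter
        (fun s : Fin n → Fin k => ∀ e ∈ A, s e.1 = s e.2)).card : ℕ)
      = k ^ (Nat.card (SimpleGraph.fromEdgeSet
          (((A.image fun e => s(e.1, e.2)) : Finset (Sym2 (Fin n))) :
            Set (Sym2 (Fin n)))).ConnectedComponent) := by
  classical
  set G := SimpleGraph.fromEdgeSet
      (((A.image fun e => s(e.1, e.2)) : Finset (Sym2 (Fin n))) :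
        Set (Sym2 (Fin n))) with hG
  have walk_eq : ∀ (s : Fin n → Fin k), (∀ e ∈ A, s e.1 = s e.2) →
      ∀ {a b : Fin n}, G.Walk a b → s a = s b := by
    intro s hs a b w
    induction w with
    | nil => rfl
    | cons h _ ih => exact (fk_adj_eq A hA s hs h).trans ih
  let eqv : {s : Fin n → Fin k // ∀ e ∈ A, s e.1 = s e.2} ≃
      (G.ConnectedComponent → Fin k) :=
    { toFun := fun s => ConnectedComponent.lift s.1
        (fun v w p _ => walk_eq s.1 s.2 p)
      invFun := fun g => ⟨fun a => g (G.connectedComponentMk a), by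
        intro e he
        have : G.connectedComponentMk e.1 = G.connectedComponentMk e.2 := by
          apply ConnectedComponent.sound
          exact (SimpleGraph.Adj.reachable (by
            rw [SimpleGraph.fromEdgeSet_adj]
            refine ⟨by
            simp only [Finset.coe_image, Set.mem_image, Finset.mem_coe]
            exact ⟨e, he, rfl⟩, hA e he⟩))
        simp [this]⟩
      left_inv := fun s => Subtype.ext (funext fun a => rfl)
      right_inv := fun g => funext fun c => by
        induction c using ConnectedComponent.ind with
        | _ v => rfl }
  have h1 : (Finset.univ.filter
      (fun s : Fin n → Fin k => ∀ e ∈ A, s e.1 = s e.2)).card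
      = Nat.card {s : Fin n → Fin k // ∀ e ∈ A, s e.1 = s e.2} := by
    rw [Nat.card_eq_fintype_card, Fintype.card_subtype]
  rw [h1, Nat.card_congr eqv, Nat.card_fun, Nat.card_eq_fintype_card,
    Fintype.card_fin]

/-- Fortuin–Kasteleyn expansion:
    Σ_s Π_{{i,j}∈E} (1 + v_{ij} δ(s(i),s(j))) = Σ_{A⊆E} k^{c(A)} Π_{{i,j}∈A} v_{ij}. -/
theorem stmt16 {R : Type*} [CommRing R] (n k : ℕ) (E : Finset (Fin n × Fin n))
    (hE : ∀ e ∈ E, e.1 < e.2) (v : Fin n × Fin n → R) :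
    ∑ s : Fin n → Fin k,
      ∏ e ∈ E, (1 + v e * (if s e.1 = s e.2 then 1 else 0)) =
    ∑ A ∈ E.powerset,
      (k : R) ^ (Nat.card (SimpleGraph.fromEdgeSet
          (((A.image fun e => s(e.1, e.2)) : Finset (Sym2 (Fin n))) :
            Set (Sym2 (Fin n)))).ConnectedComponent) *
      ∏ e ∈ A, v e := by
  classical
  have expand : ∀ s : Fin n → Fin k,
      ∏ e ∈ E, (1 + v e * (if s e.1 = s e.2 then 1 else 0))
        = ∑ A ∈ E.powerset,
            ∏ e ∈ A, (v e * (if s e.1 = s e.2 then 1 else 0)) := by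
    intro s
    have := Finset.prod_add (fun e => v e * (if s e.1 = s e.2 then 1 else 0))
      (fun _ => (1 : R)) E
    simp only [add_comm (1 : R), Finset.prod_const_one, mul_one] at this ⊢
    exact this
  simp only [expand]
  rw [Finset.sum_comm]
  refine Finset.sum_congr rfl fun A hA => ?_
  have hAne : ∀ e ∈ A, e.1 ≠ e.2 := fun e he =>
    ne_of_lt (hE e (Finset.mem_powerset.mp hA he))
  have : ∀ s : Fin n → Fin k,
      ∏ e ∈ A, (v e * (if s e.1 = s e.2 then 1 else 0))
        = (if ∀ e ∈ A, s e.1 = s e.2 then 1 else 0) * ∏ e ∈ A, v e := by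
    intro s
    rw [Finset.prod_mul_distrib, Finset.prod_boole, mul_comm]
    congr 1
    simp
  simp only [this]
  rw [← Finset.sum_mul]
  congr 1
  rw [Finset.sum_boole, fk_count A hAne, Nat.cast_pow]
end
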